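/- Let 𝒢 > 0, let p : ℝ → ℝ be continuous with ξ + p(ξ) > 0 for all ξ > 0, and let ρ : I → ℝ be differentiable on an open interval I with ρ(t) > 0 for all t ∈ I and satisfying ρ'(t) = −(ρ(t) + p(ρ(t)))·√(24π𝒢 ρ(t)) for all t ∈ I. Fix t₀ ∈ I, set ρ₀ := ρ(t₀), fix R₀ > 0, and define R(t) := R₀ · exp( − ∫_{ρ₀}^{ρ(t)} dξ/(3(ξ + p(ξ))) ). Then for every t ∈ I: R'(t) = √((8π𝒢/3) ρ(t)) · R(t), and p(ρ(t)) = −ρ(t) − R(t) ρ'(t)/(3 R'(t)). (Thus R and ρ solve the k = 0 Friedmann-Robertson-Walker equations Ṙ² = (8π𝒢/3)ρR² and p = −ρ − Rρ̇/(3Ṙ) with equation of state p = p(ρ).) -/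
import Mathlib


open Real

/-- The FRW cosmological scale factor determined by the density:
`R(t) = R₀ · exp(−∫_{ρ₀}^{ρ(t)} dξ / (3(ξ + p(ξ))))`. -/
noncomputable def Rscale (p : ℝ → ℝ) (R₀ ρ₀ : ℝ) (ρ : ℝ → ℝ) (t : ℝ) : ℝ :=
  R₀ * Real.exp (-∫ ξ in ρ₀..ρ t, 1 / (3 * (ξ + p ξ)))

/-- if `ρ` solves `ρ' = −(ρ + p(ρ))√(24π𝒢ρ)` on an open interval `I`
with `ρ > 0`, then `R(t) = R₀ exp(−∫_{ρ₀}^{ρ(t)} dξ/(3(ξ+p(ξ))))` together with `ρ`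
solves the `k = 0` FRW equations `Ṙ = √((8π𝒢/3)ρ)·R` and `p(ρ) = −ρ − Rρ̇/(3Ṙ)`. -/
theorem stmt_4 (𝒢 : ℝ) (h𝒢 : 0 < 𝒢) (p : ℝ → ℝ) (hp : Continuous p)
    (hpp : ∀ ξ : ℝ, 0 < ξ → 0 < ξ + p ξ)
    (I : Set ℝ) (hIopen : IsOpen I) (hIconn : I.OrdConnected)
    (ρ ρ' : ℝ → ℝ) (hρd : ∀ t ∈ I, HasDerivAt ρ (ρ' t) t)
    (hρpos : ∀ t ∈ I, 0 < ρ t)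
    (hode : ∀ t ∈ I, ρ' t = -((ρ t + p (ρ t)) * Real.sqrt (24 * π * 𝒢 * ρ t)))
    (t₀ : ℝ) (ht₀ : t₀ ∈ I) (R₀ : ℝ) (hR₀ : 0 < R₀) :
    ∀ t ∈ I,
      HasDerivAt (Rscale p R₀ (ρ t₀) ρ)
        (Real.sqrt (8 * π * 𝒢 / 3 * ρ t) * Rscale p R₀ (ρ t₀) ρ t) t ∧
      p (ρ t) = -ρ t - Rscale p R₀ (ρ t₀) ρ t * ρ' t /
        (3 * (Real.sqrt (8 * π * 𝒢 / 3 * ρ t) * Rscale p R₀ (ρ t₀) ρ t)) := by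
  intro t ht
  set f : ℝ → ℝ := fun ξ => 1 / (3 * (ξ + p ξ)) with hf
  have hfc : ContinuousOn f (Set.Ioi 0) := by
    apply ContinuousOn.div continuousOn_const
    · exact (continuous_const.mul (continuous_id.add hp)).continuousOn
    · intro x hx
      have := hpp x hx
      positivity
  have hρt := hρpos t ht
  have hρt₀ := hρpos t₀ ht₀
  have hsub : Set.uIcc (ρ t₀) (ρ t) ⊆ Set.Ioi 0 := by
    intro x hx
    have h1 : min (ρ t₀) (ρ t) ≤ x := hx.1
    have h2 : (0:ℝ) < min (ρ t₀) (ρ t) := lt_min hρt₀ hρt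
    exact lt_of_lt_of_le h2 h1
  have hint : IntervalIntegrable f MeasureTheory.volume (ρ t₀) (ρ t) :=
    (hfc.mono hsub).intervalIntegrable
  have hmeas : StronglyMeasurableAtFilter f (nhds (ρ t)) :=
    ⟨Set.Ioi 0, Ioi_mem_nhds hρt, hfc.aestronglyMeasurable measurableSet_Ioi⟩
  have hFd : HasDerivAt (fun x => ∫ ξ in ρ t₀..x, f ξ) (f (ρ t)) (ρ t) :=
    intervalIntegral.integral_hasDerivAt_right hint hmeas (hfc.continuousAt (Ioi_mem_nhds hρt))
  have hcomp : HasDerivAt (fun s => ∫ ξ in ρ t₀..ρ s, f ξ) (f (ρ t) * ρ' t) t :=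
    hFd.comp t (hρd t ht)
  have hRd : HasDerivAt (Rscale p R₀ (ρ t₀) ρ)
      (R₀ * Real.exp (-∫ ξ in ρ t₀..ρ t, f ξ) * -(f (ρ t) * ρ' t)) t := by
    have h := ((hcomp.neg).exp).const_mul R₀
    rw [mul_assoc]
    exact h
  have hppt := hpp (ρ t) hρt
  have hsq : Real.sqrt (8 * π * 𝒢 / 3 * ρ t) = Real.sqrt (24 * π * 𝒢 * ρ t) / 3 := by
    rw [show (8 : ℝ) * π * 𝒢 / 3 * ρ t = (24 * π * 𝒢 * ρ t) / 3 ^ 2 by ring,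
      Real.sqrt_div (by positivity), Real.sqrt_sq (by norm_num)]
  have hRval : Rscale p R₀ (ρ t₀) ρ t = R₀ * Real.exp (-∫ ξ in ρ t₀..ρ t, f ξ) := rfl
  have hder : R₀ * Real.exp (-∫ ξ in ρ t₀..ρ t, f ξ) * -(f (ρ t) * ρ' t)
      = Real.sqrt (8 * π * 𝒢 / 3 * ρ t) * Rscale p R₀ (ρ t₀) ρ t := by
    rw [hRval, hsq, hode t ht, hf]
    have hne : (ρ t + p (ρ t)) ≠ 0 := ne_of_gt hppt
    field_simp
  have hR1 : HasDerivAt (Rscale p R₀ (ρ t₀) ρ)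
      (Real.sqrt (8 * π * 𝒢 / 3 * ρ t) * Rscale p R₀ (ρ t₀) ρ t) t := hder ▸ hRd
  refine ⟨hR1, ?_⟩
  have hRpos : 0 < Rscale p R₀ (ρ t₀) ρ t := by
    rw [hRval]; positivity
  have hspos : 0 < Real.sqrt (8 * π * 𝒢 / 3 * ρ t) := by
    apply Real.sqrt_pos.2; positivity
  rw [hode t ht, hsq]
  have h24 : Real.sqrt (24 * π * 𝒢 * ρ t) = 3 * (Real.sqrt (24 * π * 𝒢 * ρ t) / 3) := by ring
  have hs24 : 0 < Real.sqrt (24 * π * 𝒢 * ρ t) := by apply Real.sqrt_pos.2; positivity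
  field_simp
  ring
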